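/- arXiv:1801.01839 — 8 statements merged into one kernel-verified Lean document; each statement's English description precedes it below -/
import Mathlib

section
/- Let P, Q ∈ ℤ[x] and let L, M ⊂ ℤ be finite sets such that every element of ℤ[x] is congruent modulo (P) to a polynomial with coefficients in L, and every element of ℤ[x] is congruent modulo (Q) to a polynomial with coefficients in M. Then there exists a finite set N ⊂ ℤ such that every element of ℤ[x] is congruent modulo (PQ) to a polynomial with coefficients in N. -/
/-- `p` has all its coefficients in `N` (the zero tail being allowed). -/
def coeffsIn (N : Finset ℤ) (p : Polynomial ℤ) : Prop :=
  ∀ i : ℕ, p.coeff i = 0 ∨ p.coeff i ∈ N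

/-- The digit system `(P, N)` has the finiteness property: `ℤ[x] = N[x] + (P)`. -/
def finProp (N : Finset ℤ) (P : Polynomial ℤ) : Prop :=
  ∀ S : Polynomial ℤ, ∃ R Q : Polynomial ℤ, coeffsIn N R ∧ S = R + P * Q

theorem product_digit_system (P Q : Polynomial ℤ) (L M : Finset ℤ)
    (hL : finProp L P) (hM : finProp M Q) :
    ∃ N : Finset ℤ, finProp N (P * Q) := by
  classical
  set bL := L.sup Int.natAbs with hbL
  set bM := M.sup Int.natAbs with hbM
  set AP := ∑ j ∈ P.support, (P.coeff j).natAbs with hAP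
  set C : ℕ := bL + AP * bM with hC
  refine ⟨Finset.Icc (-(C : ℤ)) (C : ℤ), ?_⟩
  intro S
  obtain ⟨R, A, hR, hS⟩ := hL S
  obtain ⟨R', B, hR', hA⟩ := hM A
  refine ⟨R + P * R', B, ?_, ?_⟩
  · intro i
    right
    have h1 : (R.coeff i).natAbs ≤ bL := by
      rcases hR i with h | h
      · simp [h]
      · exact Finset.le_sup h
    have hM' : ∀ j, (R'.coeff j).natAbs ≤ bM := by
      intro j
      rcases hR' j with h | h
      · simp [h]
      · exact Finset.le_sup h
    have h2 : ((P * R').coeff i).natAbs ≤ AP * bM := by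
      rw [Polynomial.coeff_mul]
      calc (∑ x ∈ Finset.HasAntidiagonal.antidiagonal i, P.coeff x.1 * R'.coeff x.2).natAbs
          ≤ ∑ x ∈ Finset.HasAntidiagonal.antidiagonal i, (P.coeff x.1 * R'.coeff x.2).natAbs :=
            by
              rw [← Nat.cast_le (α := ℤ)]
              push_cast [← Int.abs_eq_natAbs]
              exact (Finset.abs_sum_le_sum_abs _ _)
        _ ≤ ∑ x ∈ Finset.HasAntidiagonal.antidiagonal i, (P.coeff x.1).natAbs * bM := by
            refine Finset.sum_le_sum fun x _ => ?_
            rw [Int.natAbs_mul]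
            exact Nat.mul_le_mul_left _ (hM' x.2)
        _ = (∑ x ∈ Finset.HasAntidiagonal.antidiagonal i, (P.coeff x.1).natAbs) * bM := by
            rw [Finset.sum_mul]
        _ ≤ AP * bM := by
            refine Nat.mul_le_mul_right _ ?_
            rw [Finset.Nat.sum_antidiagonal_eq_sum_range_succ (fun a b => (P.coeff a).natAbs)]
            refine Finset.sum_le_sum_of_ne_zero fun x _ hx => ?_
            rw [Polynomial.mem_support_iff]
            intro h
            exact hx (by simp [h])
    have hle : (((R + P * R').coeff i)).natAbs ≤ C := by
      rw [Polynomial.coeff_add]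
      exact (Int.natAbs_add_le _ _).trans (add_le_add h1 h2)
    have habs : |(R + P * R').coeff i| ≤ (C : ℤ) := by
      rw [Int.abs_eq_natAbs]
      exact_mod_cast hle
    rw [Finset.mem_Icc]
    exact abs_le.mp habs |>.imp id id
  · rw [hS, hA]; ring
end

section
/- Let P ∈ ℤ[x] and let N ⊂ ℤ be a finite set with ℤ[x] = N[x] + (P). Then for every positive integer m there exists a finite set N_m ⊂ ℤ such that ℤ[x] = N_m[x] + (P^m). -/
open Pointwise

lemma sum_mem_pointwise_sum {ι : Type*} (s : Finset ι) (f : ι → ℤ) (t : ι → Finset ℤ)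
    (h : ∀ i ∈ s, f i ∈ t i) : (∑ i ∈ s, f i) ∈ ∑ i ∈ s, t i := by
  induction s using Finset.cons_induction with
  | empty => simp
  | cons a s ha ih =>
    simp only [Finset.sum_cons]
    exact Finset.add_mem_add (h a (by simp)) (ih fun i hi => h i (Finset.mem_cons_of_mem hi))

/-- For a fixed `T`, the coefficients of `T * R` (with `R` having coefficients in `N0 ∋ 0`)
lie in a fixed finite set containing `0`. -/
lemma mul_coeff_mem (T : Polynomial ℤ) (N0 : Finset ℤ) (h0 : (0 : ℤ) ∈ N0) :
    ∃ M : Finset ℤ, (0 : ℤ) ∈ M ∧ ∀ R : Polynomial ℤ, (∀ i, R.coeff i ∈ N0) →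
      ∀ i, (T * R).coeff i ∈ M := by
  refine ⟨∑ a ∈ T.support, N0.image (T.coeff a * ·), ?_, ?_⟩
  · have : (0 : ℤ) = ∑ a ∈ T.support, (0 : ℤ) := by simp
    rw [this]
    exact sum_mem_pointwise_sum _ _ _ fun a _ => by
      exact Finset.mem_image.2 ⟨0, h0, by simp⟩
  · intro R hR i
    have hTR : (T * R).coeff i
        = ∑ a ∈ T.support, T.coeff a * (if a ≤ i then R.coeff (i - a) else 0) := by
      conv_lhs => rw [T.as_sum_support]
      rw [Finset.sum_mul, Polynomial.finset_sum_coeff]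
      refine Finset.sum_congr rfl fun a _ => ?_
      rw [← Polynomial.C_mul_X_pow_eq_monomial, mul_assoc, Polynomial.coeff_C_mul,
        Polynomial.coeff_X_pow_mul']
    rw [hTR]
    refine sum_mem_pointwise_sum _ _ _ fun a _ => ?_
    split
    · exact Finset.mem_image_of_mem _ (hR _)
    · exact Finset.mem_image.2 ⟨0, h0, by simp⟩

lemma coeffsIn_of_mem {M : Finset ℤ} {p : Polynomial ℤ} (h : ∀ i, p.coeff i ∈ M) :
    coeffsIn M p := fun i => Or.inr (h i)

theorem power_digit_system (P : Polynomial ℤ) (N : Finset ℤ) (hN : finProp N P) :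
    ∀ m : ℕ, 0 < m → ∃ Nm : Finset ℤ, finProp Nm (P ^ m) := by
  have key : ∀ m : ℕ, ∃ Nm : Finset ℤ, finProp Nm (P ^ m) := by
    intro m
    induction m with
    | zero =>
      exact ⟨∅, fun S => ⟨0, S, fun i => Or.inl (by simp), by simp⟩⟩
    | succ k ih =>
      obtain ⟨Nk, hNk⟩ := ih
      obtain ⟨M, hM0, hM⟩ := mul_coeff_mem (P ^ k) (insert 0 N) (Finset.mem_insert_self 0 N)
      refine ⟨insert 0 Nk + M, fun S => ?_⟩
      obtain ⟨R, Q, hR, hSQ⟩ := hNk S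
      obtain ⟨R', Q', hR', hQQ'⟩ := hN Q
      refine ⟨R + P ^ k * R', Q', coeffsIn_of_mem fun i => ?_, ?_⟩
      · rw [Polynomial.coeff_add]
        refine Finset.add_mem_add ?_ (hM R' (fun j => ?_) i)
        · rcases hR i with h | h
          · rw [h]; exact Finset.mem_insert_self 0 Nk
          · exact Finset.mem_insert_of_mem h
        · rcases hR' j with h | h
          · rw [h]; exact Finset.mem_insert_self 0 N
          · exact Finset.mem_insert_of_mem h
      · rw [hSQ, hQQ']; ring
  exact fun m _ => key m
end

section
/- Let P ∈ ℤ[x] be a nonzero polynomial and suppose there exists a finite set N ⊂ ℤ with ℤ[x] = N[x] + (P). Then P has no complex root α with |α| < 1. -/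
theorem no_small_root_of_finProp (P : Polynomial ℤ) (hP : P ≠ 0)
    (N : Finset ℤ) (h : finProp N P) :
    ∀ α : ℂ, Polynomial.aeval α P = 0 → ¬ ‖α‖ < 1 := by
  intro α hroot hlt
  set r := ‖α‖ with hr
  have hr0 : 0 ≤ r := norm_nonneg α
  set M : ℝ := ((N.sup (fun n => n.natAbs) : ℕ) : ℝ) with hM
  have hM0 : 0 ≤ M := Nat.cast_nonneg _
  have hbound : ∀ R : Polynomial ℤ, coeffsIn N R →
      ‖Polynomial.aeval α R‖ ≤ M * (1 - r)⁻¹ := by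
    intro R hR
    have hcoef : ∀ i : ℕ, |((R.coeff i : ℝ))| ≤ M := by
      intro i
      rcases hR i with h0 | hmem
      · simp [h0, hM0]
      · have h1 : (R.coeff i).natAbs ≤ N.sup (fun n => n.natAbs) :=
          Finset.le_sup (f := fun n => n.natAbs) hmem
        have : |R.coeff i| ≤ ((N.sup (fun n => n.natAbs) : ℕ) : ℤ) := by
          rw [Int.abs_eq_natAbs]; exact_mod_cast h1
        calc |((R.coeff i : ℝ))| = ((|R.coeff i| : ℤ) : ℝ) := by push_cast; ring
          _ ≤ M := by rw [hM]; exact_mod_cast this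
    rw [Polynomial.aeval_eq_sum_range (R := ℤ)]
    calc ‖∑ i ∈ Finset.range (R.natDegree + 1), R.coeff i • α ^ i‖
        ≤ ∑ i ∈ Finset.range (R.natDegree + 1), ‖R.coeff i • α ^ i‖ :=
          norm_sum_le _ _
      _ ≤ ∑ i ∈ Finset.range (R.natDegree + 1), M * r ^ i := by
          apply Finset.sum_le_sum
          intro i _
          rw [zsmul_eq_mul, norm_mul, norm_pow]
          have : ‖(R.coeff i : ℂ)‖ = |((R.coeff i : ℝ))| := by
            exact Complex.norm_intCast _
          rw [this]
          exact mul_le_mul_of_nonneg_right (hcoef i) (pow_nonneg hr0 i)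
      _ = M * ∑ i ∈ Finset.range (R.natDegree + 1), r ^ i := by
          rw [Finset.mul_sum]
      _ ≤ M * ∑' i : ℕ, r ^ i := by
          apply mul_le_mul_of_nonneg_left _ hM0
          exact Summable.sum_le_tsum _ (fun i _ => pow_nonneg hr0 i)
            (summable_geometric_of_lt_one hr0 hlt)
      _ = M * (1 - r)⁻¹ := by rw [tsum_geometric_of_lt_one hr0 hlt]
  -- choose a large integer
  set m : ℤ := ⌈M * (1 - r)⁻¹⌉ + 1 with hm
  have hmpos : (0 : ℤ) < m := by
    have : (0 : ℤ) ≤ ⌈M * (1 - r)⁻¹⌉ :=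
      Int.ceil_nonneg (mul_nonneg hM0 (inv_nonneg.mpr (by linarith)))
    omega
  have hmgt : M * (1 - r)⁻¹ < (m : ℝ) := by
    have := Int.le_ceil (M * (1 - r)⁻¹)
    push_cast [hm]
    linarith
  obtain ⟨R, Q, hRN, hEq⟩ := h (Polynomial.C m)
  have hval : ((m : ℤ) : ℂ) = Polynomial.aeval α R := by
    have := congrArg (Polynomial.aeval α) hEq
    simpa [hroot] using this
  have h1 : ‖((m : ℤ) : ℂ)‖ ≤ M * (1 - r)⁻¹ := by
    rw [hval]; exact hbound R hRN
  have h2 : ‖((m : ℤ) : ℂ)‖ = (m : ℝ) := by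
    rw [show ((m : ℤ) : ℂ) = ((m : ℝ) : ℂ) by push_cast; ring, Complex.norm_real, Real.norm_eq_abs,
      abs_of_pos (by exact_mod_cast hmpos)]
  rw [h2] at h1
  linarith
end

section
/- Let P ∈ ℤ[x] be a polynomial all of whose complex roots α satisfy |α| ≥ 1. Then there exists a finite set N ⊂ ℤ such that ℤ[x] = N[x] + (P), i.e., every integer polynomial is congruent modulo (P) to a polynomial with all coefficients in N. -/
open Polynomial

/-- ℓ¹ norm of an integer polynomial's coefficients. -/
def l1norm (p : Polynomial ℤ) : ℤ := ∑ m ∈ p.support, |p.coeff m|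

lemma l1norm_nonneg (p : Polynomial ℤ) : 0 ≤ l1norm p :=
  Finset.sum_nonneg fun _ _ => abs_nonneg _

lemma sum_range_abs_le (p : Polynomial ℤ) (m : ℕ) :
    ∑ a ∈ Finset.range m, |p.coeff a| ≤ l1norm p := by
  classical
  rw [show (∑ a ∈ Finset.range m, |p.coeff a|) =
      ∑ a ∈ (Finset.range m).filter (· ∈ p.support), |p.coeff a| from ?_]
  · apply Finset.sum_le_sum_of_subset_of_nonneg
    · intro a ha; exact (Finset.mem_filter.mp ha).2
    · intro _ _ _; exact abs_nonneg _
  · symm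
    apply Finset.sum_filter_of_ne
    intro a _ h
    rw [Polynomial.mem_support_iff]
    intro h0
    exact h (by simp [h0])

/-- Bounded-remainder property: every `S` is congruent mod `P` to a
polynomial with all coefficients of absolute value at most `B`. -/
def bdd (B : ℤ) (P : Polynomial ℤ) : Prop :=
  ∀ S : Polynomial ℤ, ∃ Q : Polynomial ℤ, ∀ m : ℕ, |(S - P * Q).coeff m| ≤ B

lemma bdd_one : bdd 0 1 := by
  intro S
  exact ⟨S, by simp⟩

lemma bdd_mul {B₁ B₂ : ℤ} {P₁ P₂ : Polynomial ℤ} (h₁ : bdd B₁ P₁) (h₂ : bdd B₂ P₂)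
    (hB₂ : 0 ≤ B₂) :
    bdd (B₁ + l1norm P₁ * B₂) (P₁ * P₂) := by
  intro S
  obtain ⟨Q₁, hQ₁⟩ := h₁ S
  obtain ⟨Q₂, hQ₂⟩ := h₂ Q₁
  refine ⟨Q₂, fun m => ?_⟩
  have key : S - P₁ * P₂ * Q₂ = (S - P₁ * Q₁) + P₁ * (Q₁ - P₂ * Q₂) := by ring
  rw [key]
  have h0 : |((S - P₁ * Q₁) + P₁ * (Q₁ - P₂ * Q₂)).coeff m|
      ≤ |(S - P₁ * Q₁).coeff m| + |(P₁ * (Q₁ - P₂ * Q₂)).coeff m| := by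
    rw [Polynomial.coeff_add]; exact abs_add_le _ _
  refine h0.trans (add_le_add (hQ₁ m) ?_)
  rw [Polynomial.coeff_mul, Finset.Nat.sum_antidiagonal_eq_sum_range_succ_mk]
  calc |∑ a ∈ Finset.range (m + 1), P₁.coeff a * (Q₁ - P₂ * Q₂).coeff (m - a)|
      ≤ ∑ a ∈ Finset.range (m + 1), |P₁.coeff a * (Q₁ - P₂ * Q₂).coeff (m - a)| :=
        Finset.abs_sum_le_sum_abs _ _
    _ ≤ ∑ a ∈ Finset.range (m + 1), |P₁.coeff a| * B₂ := by
        apply Finset.sum_le_sum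
        intro a _
        rw [abs_mul]
        exact mul_le_mul_of_nonneg_left (hQ₂ _) (abs_nonneg _)
    _ = (∑ a ∈ Finset.range (m + 1), |P₁.coeff a|) * B₂ := by rw [← Finset.sum_mul]
    _ ≤ l1norm P₁ * B₂ := mul_le_mul_of_nonneg_right (sum_range_abs_le _ _) hB₂

lemma bdd_mul_unit {B : ℤ} {P : Polynomial ℤ} (h : bdd B P) (u : (Polynomial ℤ)ˣ) :
    bdd B (P * u) := by
  intro S
  obtain ⟨Q, hQ⟩ := h S
  refine ⟨(u⁻¹ : (Polynomial ℤ)ˣ) * Q, fun m => ?_⟩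
  have : P * ↑u * (↑u⁻¹ * Q) = P * Q := by
    rw [mul_assoc, ← mul_assoc (u : Polynomial ℤ), Units.mul_inv, one_mul]
  rw [this]; exact hQ m


/-- Bounded-coefficient interpolation at nodes outside the open unit disk:
any values can be interpolated by a polynomial all of whose coefficients
have absolute value at most 1 (at the price of a large degree). -/
lemma kernel_interpolation {k : ℕ} (β : Fin k → ℂ) (hinj : Function.Injective β)
    (hmod : ∀ i, 1 ≤ ‖β i‖) (t : Fin k → ℂ) :
    ∃ R : Polynomial ℂ, (∀ m, ‖R.coeff m‖ ≤ 1) ∧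
      ∀ i, Polynomial.eval (β i) R = t i := by
  classical
  rcases Nat.eq_zero_or_pos k with hk | hk
  · subst hk
    exact ⟨0, by simp, fun i => i.elim0⟩
  have hne : Nonempty (Fin k) := ⟨⟨0, hk⟩⟩
  -- Vandermonde setup
  set V : Matrix (Fin k) (Fin k) ℂ := Matrix.vandermonde β with hV
  have hdet : V.det ≠ 0 := by
    rw [hV, Matrix.det_vandermonde]
    apply Finset.prod_ne_zero_iff.mpr
    intro i _
    apply Finset.prod_ne_zero_iff.mpr
    intro j hj
    have : i ≠ j := by
      intro h; subst h; simp at hj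
    exact sub_ne_zero.mpr fun hc => this (hinj hc.symm)
  have hunit : IsUnit V.det := hdet.isUnit
  set W : Matrix (Fin k) (Fin k) ℂ := V⁻¹ with hW
  have hVW : V * W = 1 := Matrix.mul_nonsing_inv V hunit
  have key : ∀ w : Fin k → ℂ, V.mulVec (W.mulVec w) = w := by
    intro w
    rw [Matrix.mulVec_mulVec, hVW, Matrix.one_mulVec]
  set Kinv : ℝ := 1 + ∑ i : Fin k, ∑ j : Fin k, ‖W i j‖ with hKinv
  have hKinv1 : 1 ≤ Kinv := by
    rw [hKinv]
    have : 0 ≤ ∑ i : Fin k, ∑ j : Fin k, ‖W i j‖ :=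
      Finset.sum_nonneg fun _ _ => Finset.sum_nonneg fun _ _ => norm_nonneg _
    linarith
  have hKinv0 : 0 < Kinv := lt_of_lt_of_le one_pos hKinv1
  have hmv_bound : ∀ (w : Fin k → ℂ) (c : ℝ), 0 ≤ c → (∀ i, ‖w i‖ ≤ c) →
      ∀ j, ‖W.mulVec w j‖ ≤ Kinv * c := by
    intro w c hc hw j
    have h1 : ‖W.mulVec w j‖ ≤ ∑ i : Fin k, ‖W j i‖ * c := by
      refine (norm_sum_le (E := ℂ) _ _).trans ?_
      apply Finset.sum_le_sum
      intro i _
      rw [norm_mul]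
      exact mul_le_mul_of_nonneg_left (hw i) (norm_nonneg _)
    refine h1.trans ?_
    rw [← Finset.sum_mul]
    apply mul_le_mul_of_nonneg_right _ hc
    calc ∑ i : Fin k, ‖W j i‖
        ≤ ∑ i : Fin k, ∑ j' : Fin k, ‖W i j'‖ := by
          apply Finset.single_le_sum (f := fun i => ∑ j' : Fin k, ‖W i j'‖)
          · intro _ _; exact Finset.sum_nonneg fun _ _ => norm_nonneg _
          · exact Finset.mem_univ j
      _ ≤ Kinv := by rw [hKinv]; linarith
  set ε : ℝ := Kinv⁻¹ with hε
  have hε0 : 0 < ε := inv_pos.mpr hKinv0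
  -- main induction on the number of blocks
  have main : ∀ B : ℕ, ∀ t : Fin k → ℂ, (∀ i, ‖t i‖ ≤ B * ε) →
      ∃ R : Polynomial ℂ, (∀ m, ‖R.coeff m‖ ≤ 1) ∧
        (∀ m, k * B ≤ m → R.coeff m = 0) ∧ ∀ i, Polynomial.eval (β i) R = t i := by
    intro B
    induction B with
    | zero =>
      intro t ht
      have ht0 : ∀ i, t i = 0 := by
        intro i
        have := ht i
        simp only [Nat.cast_zero, zero_mul] at this
        exact norm_eq_zero.mp (le_antisymm this (norm_nonneg _))
      exact ⟨0, by simp, by simp, fun i => by simp [ht0 i]⟩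
    | succ B ih =>
      intro t ht
      set M : ℝ := Finset.univ.sup' (Finset.univ_nonempty) (fun i => ‖t i‖) with hM
      have hMle : ∀ i, ‖t i‖ ≤ M := fun i =>
        Finset.le_sup' (fun i => ‖t i‖) (Finset.mem_univ i)
      have hM0 : 0 ≤ M := le_trans (norm_nonneg _) (hMle ⟨0, hk⟩)
      have hMB : M ≤ (B + 1 : ℕ) * ε := by
        apply Finset.sup'_le
        intro i _
        exact ht i
      set σ : ℝ := if M ≤ ε then 1 else ε / M with hσ
      have hσ0 : 0 ≤ σ := by
        rw [hσ]; split
        · norm_num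
        · positivity
      have hσ1 : σ ≤ 1 := by
        rw [hσ]; split
        · exact le_refl 1
        · rename_i hMε
          push_neg at hMε
          rw [div_le_one (lt_trans hε0 hMε)]
          exact le_of_lt hMε
      set w : Fin k → ℂ := fun i => (σ : ℂ) * t i with hw
      have hwb : ∀ i, ‖w i‖ ≤ ε := by
        intro i
        rw [hw]
        simp only [norm_mul, Complex.norm_real, Real.norm_eq_abs, abs_of_nonneg hσ0]
        rw [hσ]
        split
        · rename_i hMε
          simpa using le_trans (hMle i) hMε
        · rename_i hMε
          push_neg at hMε
          have hM0' : 0 < M := lt_trans hε0 hMε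
          calc ε / M * ‖t i‖ ≤ ε / M * M :=
            mul_le_mul_of_nonneg_left (hMle i) (by positivity)
          _ = ε := by field_simp
      have hrem : ∀ i, ‖t i - w i‖ ≤ B * ε := by
        intro i
        have heq : t i - w i = ((1 - σ : ℝ) : ℂ) * t i := by
          rw [hw]; push_cast; ring
        rw [heq, norm_mul, Complex.norm_real, Real.norm_eq_abs, abs_of_nonneg (by linarith)]
        rw [hσ]
        split
        · rename_i hMε
          simp only [sub_self, zero_mul]
          positivity
        · rename_i hMε
          push_neg at hMε
          have hM0' : 0 < M := lt_trans hε0 hMε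
          calc (1 - ε / M) * ‖t i‖ ≤ (1 - ε / M) * M := by
                apply mul_le_mul_of_nonneg_left (hMle i)
                have : ε / M ≤ 1 := by rw [div_le_one hM0']; exact le_of_lt hMε
                linarith
          _ = M - ε := by field_simp
          _ ≤ B * ε := by
                push_cast at hMB ⊢
                linarith
      set n : Fin k → ℂ := W.mulVec w with hn
      have hnb : ∀ j, ‖n j‖ ≤ 1 := by
        intro j
        have := hmv_bound w ε (le_of_lt hε0) hwb j
        rw [hε, mul_inv_cancel₀ (ne_of_gt hKinv0)] at this
        exact this
      set D : Polynomial ℂ := ∑ j : Fin k, Polynomial.C (n j) * Polynomial.X ^ (j : ℕ) with hD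
      have hDcoeff : ∀ m, D.coeff m = if h : m < k then n ⟨m, h⟩ else 0 := by
        intro m
        rw [hD, Polynomial.finset_sum_coeff]
        simp only [Polynomial.coeff_C_mul, Polynomial.coeff_X_pow]
        split
        · rename_i h
          rw [Finset.sum_eq_single (⟨m, h⟩ : Fin k)]
          · simp
          · intro j _ hj
            have hne' : m ≠ (j : ℕ) := fun hc => hj (by ext; simp [hc.symm])
            simp [hne']
          · intro hc; exact absurd (Finset.mem_univ _) hc
        · rename_i h
          apply Finset.sum_eq_zero
          intro j _
          have hne' : m ≠ (j : ℕ) := fun hc => h (hc ▸ j.isLt)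
          simp [hne']
      have hDeval : ∀ i, Polynomial.eval (β i) D = w i := by
        intro i
        rw [hD]
        rw [Polynomial.eval_finset_sum]
        simp only [Polynomial.eval_mul, Polynomial.eval_C, Polynomial.eval_pow,
          Polynomial.eval_X]
        have : ∑ j : Fin k, n j * β i ^ (j : ℕ) = V.mulVec n i := by
          rw [hV]
          simp only [Matrix.mulVec, dotProduct, Matrix.vandermonde, Matrix.of_apply]
          apply Finset.sum_congr rfl
          intro j _
          ring
        rw [this, hn, key]
      set t' : Fin k → ℂ := fun i => (t i - w i) / β i ^ k with ht'
      have ht'b : ∀ i, ‖t' i‖ ≤ B * ε := by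
        intro i
        rw [ht']
        simp only [norm_div, norm_pow]
        have h1 : (1 : ℝ) ≤ ‖β i‖ ^ k := one_le_pow₀ (hmod i)
        calc ‖t i - w i‖ / ‖β i‖ ^ k
            ≤ ‖t i - w i‖ := div_le_self (norm_nonneg _) h1
          _ ≤ B * ε := hrem i
      obtain ⟨R', hR'c, hR'z, hR'e⟩ := ih t' ht'b
      refine ⟨D + R' * Polynomial.X ^ k, ?_, ?_, ?_⟩
      · intro m
        rw [Polynomial.coeff_add, Polynomial.coeff_mul_X_pow']
        rcases Nat.lt_or_ge m k with hmk | hmk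
        · rw [if_neg (by omega), hDcoeff, dif_pos hmk, add_zero]
          exact hnb _
        · rw [if_pos hmk, hDcoeff, dif_neg (by omega), zero_add]
          exact hR'c _
      · intro m hm
        have hmk : k ≤ m := le_trans (by nlinarith) hm
        rw [Polynomial.coeff_add, Polynomial.coeff_mul_X_pow', if_pos hmk,
          hDcoeff, dif_neg (by omega), zero_add]
        apply hR'z
        have : k * (B + 1) = k * B + k := by ring
        omega
      · intro i
        have hβne : β i ^ k ≠ 0 := pow_ne_zero _ (by
          intro hc
          have := hmod i
          rw [hc] at this
          simp at this
          linarith)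
        rw [Polynomial.eval_add, Polynomial.eval_mul, Polynomial.eval_pow,
          Polynomial.eval_X, hDeval, hR'e, ht']
        field_simp
        ring
  -- conclude
  set M : ℝ := Finset.univ.sup' (Finset.univ_nonempty) (fun i => ‖t i‖) with hM
  have hM0 : 0 ≤ M := by
    have h' := Finset.le_sup' (fun i => ‖t i‖) (Finset.mem_univ (⟨0, hk⟩ : Fin k))
    exact le_trans (norm_nonneg _) h'
  obtain ⟨R, hRc, _, hRe⟩ := main (Nat.ceil (M / ε)) t (by
    intro i
    have h1 : ‖t i‖ ≤ M :=
      Finset.le_sup' (fun i => ‖t i‖) (Finset.mem_univ i)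
    have h2 : M / ε ≤ (Nat.ceil (M / ε) : ℝ) := Nat.le_ceil _
    calc ‖t i‖ ≤ M := h1
      _ ≤ (Nat.ceil (M / ε) : ℝ) * ε := (div_le_iff₀ hε0).mp h2)
  exact ⟨R, hRc, hRe⟩

lemma bdd_main (P : Polynomial ℤ) (hP : P ≠ 0)
    (hnd : ((P.map (Int.castRingHom ℂ)).roots).Nodup)
    (h : ∀ α : ℂ, Polynomial.aeval α P = 0 → 1 ≤ ‖α‖) :
    bdd (1 + l1norm P) P := by
  classical
  set p : Polynomial ℂ := P.map (Int.castRingHom ℂ) with hp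
  have hp0 : p ≠ 0 := by
    rw [hp]
    exact (Polynomial.map_ne_zero_iff (f := Int.castRingHom ℂ)
      (by exact Int.cast_injective)).mpr hP
  -- roots as a function
  set l : List ℂ := p.roots.toList with hl
  have hlnd : l.Nodup := by
    rw [hl, ← Multiset.coe_nodup, Multiset.coe_toList]
    exact hnd
  set k : ℕ := l.length with hk
  set β : Fin k → ℂ := fun i => l.get i with hβ
  have hβinj : Function.Injective β := List.nodup_iff_injective_get.mp hlnd
  have hβroot : ∀ i, (β i) ∈ p.roots := by
    intro i
    rw [← Multiset.mem_toList]
    exact l.get_mem i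
  have haeval : ∀ a ∈ p.roots, Polynomial.aeval a P = 0 := by
    intro a ha
    have h' := Polynomial.isRoot_of_mem_roots ha
    rw [Polynomial.IsRoot, hp, Polynomial.eval_map] at h'
    rw [Polynomial.aeval_def, algebraMap_int_eq]
    exact h'
  have hβmod : ∀ i, 1 ≤ ‖β i‖ := fun i => h _ (haeval _ (hβroot i))
  -- the found polynomial divides things vanishing on all roots
  have hfact : p = Polynomial.C p.leadingCoeff *
      (p.roots.map fun a => Polynomial.X - Polynomial.C a).prod :=
    (Polynomial.C_leadingCoeff_mul_prod_multiset_X_sub_C IsAlgClosed.card_roots_eq_natDegree).symm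
  have hlc : p.leadingCoeff ≠ 0 := Polynomial.leadingCoeff_ne_zero.mpr hp0
  intro S
  set Sc : Polynomial ℂ := S.map (Int.castRingHom ℂ) with hSc
  obtain ⟨R, hRc, hRe⟩ := kernel_interpolation β hβinj hβmod
    (fun i => Polynomial.eval (β i) Sc)
  -- p divides Sc - R
  have hdvd : p ∣ Sc - R := by
    rcases eq_or_ne (Sc - R) 0 with h0 | h0
    · rw [h0]; exact dvd_zero p
    have hsub : p.roots ⊆ (Sc - R).roots := by
      intro a ha
      rw [Polynomial.mem_roots h0]
      obtain ⟨i, hi⟩ := List.mem_iff_get.mp (Multiset.mem_toList.mpr ha)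
      have : Polynomial.eval a R = Polynomial.eval a Sc := by
        rw [← hi]; exact hRe i
      simp [Polynomial.IsRoot, Polynomial.eval_sub, this]
    have hle : p.roots ≤ (Sc - R).roots := (Multiset.le_iff_subset hnd).mpr hsub
    have h1 : (p.roots.map fun a => Polynomial.X - Polynomial.C a).prod ∣ Sc - R :=
      (Multiset.prod_dvd_prod_of_le (Multiset.map_le_map hle)).trans
        (Polynomial.prod_multiset_X_sub_C_dvd _)
    obtain ⟨y, hy⟩ := h1
    refine ⟨Polynomial.C p.leadingCoeff⁻¹ * y, ?_⟩
    have hCC : Polynomial.C p.leadingCoeff * Polynomial.C p.leadingCoeff⁻¹ = 1 := by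
      rw [← Polynomial.C_mul, mul_inv_cancel₀ hlc, Polynomial.C_1]
    calc Sc - R = (Multiset.map (fun a => Polynomial.X - Polynomial.C a) p.roots).prod * y := hy
      _ = (Polynomial.C p.leadingCoeff * Polynomial.C p.leadingCoeff⁻¹) *
          ((Multiset.map (fun a => Polynomial.X - Polynomial.C a) p.roots).prod * y) := by
            rw [hCC, one_mul]
      _ = (Polynomial.C p.leadingCoeff *
          (Multiset.map (fun a => Polynomial.X - Polynomial.C a) p.roots).prod) *
          (Polynomial.C p.leadingCoeff⁻¹ * y) := by ring
      _ = p * (Polynomial.C p.leadingCoeff⁻¹ * y) := by rw [← hfact]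
  obtain ⟨Qc, hQc⟩ := hdvd
  -- integer rounding of Qc
  set Qi : Polynomial ℤ := ∑ m ∈ Qc.support, Polynomial.C (round ((Qc.coeff m).re)) *
    Polynomial.X ^ m with hQi
  have hQicoeff : ∀ m, Qi.coeff m = round ((Qc.coeff m).re) := by
    intro m
    rw [hQi, Polynomial.finset_sum_coeff]
    simp only [Polynomial.coeff_C_mul, Polynomial.coeff_X_pow]
    rcases Finset.decidableMem m Qc.support with hm | hm
    · rw [Finset.sum_eq_zero]
      · have : Qc.coeff m = 0 := Polynomial.notMem_support_iff.mp hm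
        simp [this]
      · intro b hb
        have : m ≠ b := by rintro rfl; exact hm hb
        simp [this]
    · rw [Finset.sum_eq_single m]
      · simp
      · intro b _ hb; simp [Ne.symm hb]
      · intro hc; exact absurd hm hc
  refine ⟨Qi, fun m => ?_⟩
  -- work over ℂ
  set c : ℤ := (S - P * Qi).coeff m with hc
  have hcast : (c : ℂ) = R.coeff m +
      ∑ a ∈ Finset.range (m + 1), p.coeff a * (Qc.coeff (m - a) - (round ((Qc.coeff (m - a)).re) : ℤ)) := by
    have e1 : ((S - P * Qi).map (Int.castRingHom ℂ)).coeff m = (c : ℂ) := by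
      rw [Polynomial.coeff_map, hc]; rfl
    rw [← e1]
    rw [Polynomial.map_sub, Polynomial.map_mul, ← hSc, ← hp]
    have e2 : Sc = R + p * Qc := by rw [← hQc]; ring
    rw [e2]
    have e3 : ∀ n, (Qi.map (Int.castRingHom ℂ)).coeff n = ((round ((Qc.coeff n).re) : ℤ) : ℂ) := by
      intro n; rw [Polynomial.coeff_map, hQicoeff]; rfl
    rw [Polynomial.coeff_sub, Polynomial.coeff_add]
    have e4 : (p * Qc).coeff m - (p * Qi.map (Int.castRingHom ℂ)).coeff m
        = ∑ a ∈ Finset.range (m + 1), p.coeff a *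
          (Qc.coeff (m - a) - (round ((Qc.coeff (m - a)).re) : ℤ)) := by
      rw [Polynomial.coeff_mul, Polynomial.coeff_mul,
        Finset.Nat.sum_antidiagonal_eq_sum_range_succ_mk,
        Finset.Nat.sum_antidiagonal_eq_sum_range_succ_mk, ← Finset.sum_sub_distrib]
      apply Finset.sum_congr rfl
      intro a _
      rw [e3]
      ring
    rw [← e4]
    ring
  -- real part bound
  have hre : |(c : ℝ)| ≤ 1 + (l1norm P : ℝ) := by
    have hcre : (c : ℝ) = ((c : ℂ)).re := by simp
    rw [hcre, hcast]
    rw [Complex.add_re, Complex.re_sum]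
    have hb1 : |(R.coeff m).re| ≤ 1 :=
      le_trans (Complex.abs_re_le_norm _) (hRc m)
    have hb2 : ∀ a ∈ Finset.range (m + 1),
        |(p.coeff a * (Qc.coeff (m - a) - (round ((Qc.coeff (m - a)).re) : ℤ))).re|
          ≤ |(P.coeff a : ℝ)| := by
      intro a _
      have hpa : p.coeff a = ((P.coeff a : ℝ) : ℂ) := by
        rw [hp, Polynomial.coeff_map]
        simp
      rw [hpa]
      have : (((P.coeff a : ℝ) : ℂ) * (Qc.coeff (m - a) - (round ((Qc.coeff (m - a)).re) : ℤ))).re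
          = (P.coeff a : ℝ) * ((Qc.coeff (m - a)).re - round ((Qc.coeff (m - a)).re)) := by
        rw [Complex.mul_re]
        simp
      rw [this, abs_mul]
      have hround : |(Qc.coeff (m - a)).re - round ((Qc.coeff (m - a)).re)| ≤ 1 :=
        le_trans (abs_sub_round _) (by norm_num)
      calc |(P.coeff a : ℝ)| * |(Qc.coeff (m - a)).re - round ((Qc.coeff (m - a)).re)|
          ≤ |(P.coeff a : ℝ)| * 1 := mul_le_mul_of_nonneg_left hround (abs_nonneg _)
        _ = |(P.coeff a : ℝ)| := mul_one _
    calc |(R.coeff m).re + ∑ a ∈ Finset.range (m + 1),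
          (p.coeff a * (Qc.coeff (m - a) - (round ((Qc.coeff (m - a)).re) : ℤ))).re|
        ≤ |(R.coeff m).re| + |∑ a ∈ Finset.range (m + 1),
          (p.coeff a * (Qc.coeff (m - a) - (round ((Qc.coeff (m - a)).re) : ℤ))).re| := abs_add_le _ _
      _ ≤ 1 + (l1norm P : ℝ) := by
          apply add_le_add hb1
          refine (Finset.abs_sum_le_sum_abs _ _).trans ?_
          refine (Finset.sum_le_sum hb2).trans ?_
          have := sum_range_abs_le P (m + 1)
          calc ∑ a ∈ Finset.range (m + 1), |(P.coeff a : ℝ)|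
              = ((∑ a ∈ Finset.range (m + 1), |P.coeff a| : ℤ) : ℝ) := by
                push_cast; rfl
            _ ≤ (l1norm P : ℝ) := by exact_mod_cast this
  -- conclude in ℤ
  have : ((|c| : ℤ) : ℝ) ≤ ((1 + l1norm P : ℤ) : ℝ) := by
    push_cast
    exact hre
  exact_mod_cast this

/-- Roots of a prime factor of degree ≥ 1 (or any prime) are distinct over ℂ. -/
lemma roots_nodup_of_prime (f : Polynomial ℤ) (hf : Prime f) :
    ((f.map (Int.castRingHom ℂ)).roots).Nodup := by
  rcases Nat.eq_zero_or_pos f.natDegree with hd | hd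
  · rw [Polynomial.eq_C_of_natDegree_eq_zero hd, Polynomial.map_C, Polynomial.roots_C]
    exact Multiset.nodup_zero
  · have hirr : Irreducible f := hf.irreducible
    have hprim : f.IsPrimitive := by
      intro r hr
      obtain ⟨g, hg⟩ := hr
      rcases hirr.isUnit_or_isUnit hg with hu | hu
      · exact Polynomial.isUnit_C.mp hu
      · exfalso
        have hr0 : r ≠ 0 := by
          rintro rfl
          rw [Polynomial.C_0, zero_mul] at hg
          exact hf.ne_zero hg
        have hg0 : g ≠ 0 := by
          rintro rfl
          rw [mul_zero] at hg
          exact hf.ne_zero hg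
        have hdeg : f.natDegree = 0 := by
          rw [hg, Polynomial.natDegree_mul (by simpa using hr0) hg0, Polynomial.natDegree_C,
            Polynomial.natDegree_eq_zero_of_isUnit hu]
        omega
    have hirrQ : Irreducible (f.map (Int.castRingHom ℚ)) :=
      (Polynomial.IsPrimitive.Int.irreducible_iff_irreducible_map_cast hprim).mp hirr
    have hsep : (f.map (Int.castRingHom ℚ)).Separable := hirrQ.separable
    have hsepC : ((f.map (Int.castRingHom ℚ)).map (Rat.castHom ℂ)).Separable := hsep.map
    rw [Polynomial.map_map] at hsepC
    have : (Rat.castHom ℂ).comp (Int.castRingHom ℚ) = Int.castRingHom ℂ := RingHom.ext_int _ _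
    rw [this] at hsepC
    exact Polynomial.nodup_roots hsepC

lemma bdd_multiset_prod (ms : Multiset (Polynomial ℤ))
    (h : ∀ f ∈ ms, ∃ B : ℤ, 0 ≤ B ∧ bdd B f) :
    ∃ B : ℤ, 0 ≤ B ∧ bdd B ms.prod := by
  induction ms using Multiset.induction_on with
  | empty => exact ⟨0, le_refl 0, by simpa using bdd_one⟩
  | cons a s ih =>
    obtain ⟨Ba, hBa0, hBa⟩ := h a (Multiset.mem_cons_self a s)
    obtain ⟨Bs, hBs0, hBs⟩ := ih fun f hf => h f (Multiset.mem_cons_of_mem hf)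
    refine ⟨Ba + l1norm a * Bs, ?_, ?_⟩
    · have := l1norm_nonneg a
      positivity
    · rw [Multiset.prod_cons]
      exact bdd_mul hBa hBs hBs0

theorem finProp_of_no_small_root (P : Polynomial ℤ)
    (h : ∀ α : ℂ, Polynomial.aeval α P = 0 → 1 ≤ ‖α‖) :
    ∃ N : Finset ℤ, finProp N P := by
  classical
  have hP : P ≠ 0 := by
    intro h0
    have := h 0 (by rw [h0]; simp)
    rw [norm_zero] at this
    linarith
  -- factor into primes
  have hassoc := UniqueFactorizationMonoid.factors_prod hP
  obtain ⟨u, hu⟩ := hassoc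
  have hfac : ∀ f ∈ UniqueFactorizationMonoid.factors P, ∃ B : ℤ, 0 ≤ B ∧ bdd B f := by
    intro f hf
    have hprime : Prime f := UniqueFactorizationMonoid.prime_of_factor f hf
    have hdvd : f ∣ P := by
      have h1 : f ∣ (UniqueFactorizationMonoid.factors P).prod := Multiset.dvd_prod hf
      rw [← hu]
      exact Dvd.dvd.mul_right h1 _
    have hroots : ∀ α : ℂ, Polynomial.aeval α f = 0 → 1 ≤ ‖α‖ := by
      intro α hα
      obtain ⟨g, hg⟩ := hdvd
      apply h
      rw [hg, map_mul, hα, zero_mul]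
    refine ⟨1 + l1norm f, ?_, bdd_main f hprime.ne_zero (roots_nodup_of_prime f hprime) hroots⟩
    have := l1norm_nonneg f
    linarith
  obtain ⟨B, hB0, hB⟩ := bdd_multiset_prod _ hfac
  have hBP : bdd B P := by
    rw [← hu]
    exact bdd_mul_unit hB u
  refine ⟨Finset.Icc (-B) B, fun S => ?_⟩
  obtain ⟨Q, hQ⟩ := hBP S
  refine ⟨S - P * Q, Q, fun i => Or.inr ?_, by ring⟩
  rw [Finset.mem_Icc]
  exact abs_le.mp (hQ i)
end

section
/- Let A be an n×n matrix with rational entries, and let D ⊂ ℚ^n be a finite set. If A has a complex eigenvalue λ with |λ| < 1, then the set D[A] := { d₀ + A d₁ + ⋯ + A^k d_k : k ∈ ℕ, d_j ∈ D } does not contain the lattice ℤ^n. In particular, (A, D) cannot have the finiteness property. -/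
open Matrix

/-- The set `D[A]` of all finite radix representations `d₀ + A d₁ + ⋯ + A^k d_k`
with digits `d_j ∈ D`. -/
def radix {ι : Type*} [Fintype ι] [DecidableEq ι]
    (A : Matrix ι ι ℚ) (D : Set (ι → ℚ)) : Set (ι → ℚ) :=
  { z | ∃ (k : ℕ) (d : ℕ → ι → ℚ), (∀ j, d j ∈ D) ∧
      z = ∑ j ∈ Finset.range (k + 1), (A ^ j).mulVec (d j) }

/-- Vectors with integer entries, i.e. the lattice `ℤ^n` inside `ℚ^n`. -/
def intVecs {ι : Type*} : Set (ι → ℚ) :=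
  { v | ∀ i, ∃ m : ℤ, v i = (m : ℚ) }

/-- The module `ℤ^n[A] = ⋃_{k ≥ 1} (ℤ^n + Aℤ^n + ⋯ + A^{k-1}ℤ^n)`. -/
def latticeModule {ι : Type*} [Fintype ι] [DecidableEq ι]
    (A : Matrix ι ι ℚ) : Set (ι → ℚ) :=
  radix A intVecs

theorem no_finiteness_with_small_eigenvalue {n : ℕ}
    (A : Matrix (Fin n) (Fin n) ℚ) (D : Set (Fin n → ℚ)) (hD : D.Finite)
    (lam : ℂ) (hlam : ‖lam‖ < 1)
    (heig : ∃ v : Fin n → ℂ, v ≠ 0 ∧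
      (A.map (fun q : ℚ => (q : ℂ))).mulVec v = lam • v) :
    ¬ ∀ z : Fin n → ℤ, (fun i => (z i : ℚ)) ∈ radix A D := by
  intro hall
  obtain ⟨v, hv, hAv⟩ := heig
  set B : Matrix (Fin n) (Fin n) ℂ := A.map (fun q : ℚ => (q : ℂ)) with hB
  -- det (B - lam • 1) = 0
  have hdet : (B - lam • 1).det = 0 := by
    rw [← Matrix.exists_mulVec_eq_zero_iff]
    refine ⟨v, hv, ?_⟩
    rw [Matrix.sub_mulVec, hAv, Matrix.smul_mulVec, Matrix.one_mulVec, sub_self]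
  have hdetT : ((B - lam • 1)ᵀ).det = 0 := by rw [Matrix.det_transpose]; exact hdet
  obtain ⟨w, hw, hweq⟩ := Matrix.exists_mulVec_eq_zero_iff.mpr hdetT
  -- left eigenvector: vecMul w B = lam • w
  have hwB : Matrix.vecMul w B = lam • w := by
    have : (Bᵀ - lam • 1).mulVec w = 0 := by
      simpa [Matrix.transpose_sub, Matrix.transpose_smul] using hweq
    rw [Matrix.sub_mulVec, Matrix.smul_mulVec, Matrix.one_mulVec, sub_eq_zero] at this
    rw [← Matrix.mulVec_transpose]; exact this
  have hwBj : ∀ j : ℕ, Matrix.vecMul w (B ^ j) = lam ^ j • w := by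
    intro j
    induction j with
    | zero => simp
    | succ j ih =>
      rw [pow_succ, ← Matrix.vecMul_vecMul, ih, Matrix.smul_vecMul, hwB, smul_smul, ← pow_succ]
  -- the linear functional
  set φ : (Fin n → ℚ) → ℂ := fun x => w ⬝ᵥ (fun i => (x i : ℂ)) with hφ
  have hcast : ∀ (j : ℕ) (d : Fin n → ℚ),
      (fun i => (((A ^ j).mulVec d) i : ℂ)) = (B ^ j).mulVec (fun i => (d i : ℂ)) := by
    intro j d
    have hBj : B ^ j = (A ^ j).map (fun q : ℚ => (q : ℂ)) := by
      have := (map_pow ((Rat.castHom ℂ).mapMatrix) A j).symm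
      simpa [RingHom.mapMatrix, hB] using this
    funext i
    rw [hBj]
    simp [Matrix.mulVec, dotProduct, Matrix.map]
  have hφterm : ∀ (j : ℕ) (d : Fin n → ℚ),
      φ ((A ^ j).mulVec d) = lam ^ j * φ d := by
    intro j d
    rw [hφ]
    simp only
    rw [hcast j d, Matrix.dotProduct_mulVec, hwBj j, smul_dotProduct, smul_eq_mul]
  -- bound constant
  set C : ℝ := ∑ d ∈ hD.toFinset, ‖φ d‖ with hC
  have hC0 : 0 ≤ C := Finset.sum_nonneg fun _ _ => norm_nonneg _
  have hCd : ∀ d ∈ D, ‖φ d‖ ≤ C := by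
    intro d hd
    exact Finset.single_le_sum (fun _ _ => norm_nonneg _) (hD.mem_toFinset.mpr hd)
  set r : ℝ := ‖lam‖ with hr
  have hr0 : 0 ≤ r := norm_nonneg _
  have hgeom : ∀ k : ℕ, ∑ j ∈ Finset.range (k + 1), r ^ j ≤ 1 / (1 - r) := by
    intro k
    have h := Summable.sum_le_tsum (Finset.range (k + 1)) (fun i _ => pow_nonneg hr0 i)
      (summable_geometric_of_lt_one hr0 hlam)
    rw [tsum_geometric_of_lt_one hr0 hlam] at h
    rw [one_div]
    exact h
  -- bound on radix elements
  have hbound : ∀ z ∈ radix A D, ‖φ z‖ ≤ C / (1 - r) := by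
    intro z hz
    obtain ⟨k, d, hd, rfl⟩ := hz
    have h1 : (0:ℝ) < 1 - r := by linarith
    have hφsum : φ (∑ j ∈ Finset.range (k + 1), (A ^ j).mulVec (d j)) =
        ∑ j ∈ Finset.range (k + 1), lam ^ j * φ (d j) := by
      rw [hφ]
      simp only
      have : (fun i => ((∑ j ∈ Finset.range (k + 1), (A ^ j).mulVec (d j)) i : ℂ)) =
          ∑ j ∈ Finset.range (k + 1), (fun i => (((A ^ j).mulVec (d j)) i : ℂ)) := by
        funext i; push_cast [Finset.sum_apply]; rfl
      rw [this]
      rw [show (w ⬝ᵥ ∑ j ∈ Finset.range (k + 1), fun i => (((A ^ j).mulVec (d j)) i : ℂ)) =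
          ∑ j ∈ Finset.range (k + 1), w ⬝ᵥ fun i => (((A ^ j).mulVec (d j)) i : ℂ) by
        simp only [dotProduct, Finset.sum_apply, Finset.mul_sum]
        exact Finset.sum_comm]
      refine Finset.sum_congr rfl fun j _ => ?_
      have := hφterm j (d j)
      rw [hφ] at this
      simpa using this
    rw [hφsum]
    calc ‖∑ j ∈ Finset.range (k + 1), lam ^ j * φ (d j)‖
        ≤ ∑ j ∈ Finset.range (k + 1), ‖lam ^ j * φ (d j)‖ := by
          exact norm_sum_le _ _
      _ ≤ ∑ j ∈ Finset.range (k + 1), r ^ j * C := by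
          refine Finset.sum_le_sum fun j _ => ?_
          rw [norm_mul, norm_pow]
          exact mul_le_mul_of_nonneg_left (hCd _ (hd j)) (pow_nonneg hr0 _)
      _ = (∑ j ∈ Finset.range (k + 1), r ^ j) * C := by rw [Finset.sum_mul]
      _ ≤ (1 / (1 - r)) * C := mul_le_mul_of_nonneg_right (hgeom k) hC0
      _ = C / (1 - r) := by ring
  -- find coordinate with w i ≠ 0
  obtain ⟨i, hwi⟩ := Function.ne_iff.mp hw
  simp only [Pi.zero_apply] at hwi
  have hwipos : 0 < ‖w i‖ := norm_pos_iff.mpr hwi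
  obtain ⟨m, hm⟩ : ∃ m : ℕ, C / (1 - r) < (m : ℝ) * ‖w i‖ := by
    obtain ⟨m, hm⟩ := exists_nat_gt (C / (1 - r) / ‖w i‖)
    exact ⟨m, by rwa [div_lt_iff₀ hwipos] at hm⟩
  have hmem := hall (fun k => if k = i then (m : ℤ) else 0)
  have hb := hbound _ hmem
  have hφz : φ (fun k => (((if k = i then (m : ℤ) else 0) : ℤ) : ℚ)) = (m : ℂ) * w i := by
    rw [hφ]
    simp only [dotProduct]
    rw [Finset.sum_eq_single i]
    · simp [mul_comm]
    · intro b _ hbne; simp [hbne]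
    · intro h; exact absurd (Finset.mem_univ i) h
  rw [hφz] at hb
  rw [norm_mul, Complex.norm_natCast] at hb
  linarith
end

section
/- Let A ∈ M_m(ℚ) and B ∈ M_n(ℚ), and let D_A ⊂ ℤ^m, D_B ⊂ ℤ^n be finite sets containing the respective zero vectors. Then (A ⊕ B, D_A ⊕ D_B) has the finiteness property in ℤ^{m+n}[A ⊕ B] if and only if (A, D_A) has the finiteness property in ℤ^m[A] and (B, D_B) has the finiteness property in ℤ^n[B]. -/
open Matrix

/-- The digit system `(A, D)` has the finiteness property in `ℤ^n[A]`:
every element of `ℤ^n[A]` admits a radix representation with digits in `D`. -/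
def hasFinProp {ι : Type*} [Fintype ι] [DecidableEq ι]
    (A : Matrix ι ι ℚ) (D : Set (ι → ℚ)) : Prop :=
  latticeModule A ⊆ radix A D

private lemma block_pow {m n : ℕ} (A : Matrix (Fin m) (Fin m) ℚ)
    (B : Matrix (Fin n) (Fin n) ℚ) (j : ℕ) :
    (fromBlocks A 0 0 B) ^ j = fromBlocks (A ^ j) 0 0 (B ^ j) := by
  induction j with
  | zero => simp
  | succ j ih => simp [pow_succ, ih, fromBlocks_multiply]

private lemma block_mulVec {m n : ℕ} (A : Matrix (Fin m) (Fin m) ℚ)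
    (B : Matrix (Fin n) (Fin n) ℚ) (x : Fin m → ℚ) (y : Fin n → ℚ) :
    (fromBlocks A 0 0 B).mulVec (Sum.elim x y) = Sum.elim (A.mulVec x) (B.mulVec y) := by
  simp [fromBlocks_mulVec]

private lemma elim_sum {m n : ℕ} (A : Matrix (Fin m) (Fin m) ℚ)
    (B : Matrix (Fin n) (Fin n) ℚ) (k : ℕ) (f : ℕ → Fin m → ℚ) (g : ℕ → Fin n → ℚ) :
    ∑ j ∈ Finset.range (k + 1), ((fromBlocks A 0 0 B) ^ j).mulVec (Sum.elim (f j) (g j))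
      = Sum.elim (∑ j ∈ Finset.range (k + 1), (A ^ j).mulVec (f j))
          (∑ j ∈ Finset.range (k + 1), (B ^ j).mulVec (g j)) := by
  funext x
  cases x with
  | inl i => simp [Finset.sum_apply, block_pow, block_mulVec]
  | inr i => simp [Finset.sum_apply, block_pow, block_mulVec]

private lemma radix_pad {ι : Type*} [Fintype ι] [DecidableEq ι] (A : Matrix ι ι ℚ)
    (D : Set (ι → ℚ)) (h0 : (0 : ι → ℚ) ∈ D) {z : ι → ℚ} {k : ℕ} {d : ℕ → ι → ℚ}
    (hd : ∀ j, d j ∈ D) (hz : z = ∑ j ∈ Finset.range (k + 1), (A ^ j).mulVec (d j))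
    {K : ℕ} (hK : k ≤ K) :
    ∃ d' : ℕ → ι → ℚ, (∀ j, d' j ∈ D) ∧
      z = ∑ j ∈ Finset.range (K + 1), (A ^ j).mulVec (d' j) := by
  refine ⟨fun j => if j < k + 1 then d j else 0, fun j => ?_, ?_⟩
  · by_cases h : j < k + 1 <;> simp [h, hd, h0]
  · have hsub : Finset.range (k + 1) ⊆ Finset.range (K + 1) :=
      Finset.range_subset_range.2 (by omega)
    have htrunc : ∑ j ∈ Finset.range (K + 1), (A ^ j).mulVec (if j < k + 1 then d j else 0)
        = ∑ j ∈ Finset.range (k + 1), (A ^ j).mulVec (if j < k + 1 then d j else 0) :=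
      (Finset.sum_subset hsub (fun j _ hj => by
        simp only [Finset.mem_range, not_lt] at hj
        simp [Nat.not_lt.2 hj])).symm
    rw [hz, htrunc]
    exact Finset.sum_congr rfl fun j hj => by simp [Finset.mem_range.1 hj]

theorem block_finiteness {m n : ℕ}
    (A : Matrix (Fin m) (Fin m) ℚ) (B : Matrix (Fin n) (Fin n) ℚ)
    (DA : Set (Fin m → ℚ)) (DB : Set (Fin n → ℚ))
    (hDA : DA.Finite) (hDB : DB.Finite)
    (hDAZ : DA ⊆ intVecs) (hDBZ : DB ⊆ intVecs)
    (h0A : (0 : Fin m → ℚ) ∈ DA) (h0B : (0 : Fin n → ℚ) ∈ DB) :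
    hasFinProp (Matrix.fromBlocks A 0 0 B) {w | ∃ v ∈ DA, ∃ u ∈ DB, w = Sum.elim v u}
      ↔ hasFinProp A DA ∧ hasFinProp B DB := by
  constructor
  · intro h
    constructor
    · -- finiteness for A
      intro z hz
      obtain ⟨k, d, hd, hzeq⟩ := hz
      have hZ : Sum.elim z (0 : Fin n → ℚ) ∈ latticeModule (fromBlocks A 0 0 B) := by
        refine ⟨k, fun j => Sum.elim (d j) 0, fun j i => ?_, ?_⟩
        · cases i with
          | inl i => exact hd j i
          | inr i => exact ⟨0, rfl⟩
        · rw [elim_sum, ← hzeq]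
          congr 1
          simp
      obtain ⟨K, D', hD', hEq⟩ := h hZ
      choose v hv u hu heq using hD'
      refine ⟨K, v, hv, ?_⟩
      have : Sum.elim z (0 : Fin n → ℚ)
          = Sum.elim (∑ j ∈ Finset.range (K + 1), (A ^ j).mulVec (v j))
              (∑ j ∈ Finset.range (K + 1), (B ^ j).mulVec (u j)) := by
        rw [hEq, ← elim_sum]
        exact Finset.sum_congr rfl fun j _ => by rw [heq]
      have := congrArg (· ∘ Sum.inl) this
      simpa using this
    · -- finiteness for B
      intro z hz
      obtain ⟨k, d, hd, hzeq⟩ := hz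
      have hZ : Sum.elim (0 : Fin m → ℚ) z ∈ latticeModule (fromBlocks A 0 0 B) := by
        refine ⟨k, fun j => Sum.elim 0 (d j), fun j i => ?_, ?_⟩
        · cases i with
          | inl i => exact ⟨0, rfl⟩
          | inr i => exact hd j i
        · rw [elim_sum, ← hzeq]
          congr 1
          simp
      obtain ⟨K, D', hD', hEq⟩ := h hZ
      choose v hv u hu heq using hD'
      refine ⟨K, u, hu, ?_⟩
      have : Sum.elim (0 : Fin m → ℚ) z
          = Sum.elim (∑ j ∈ Finset.range (K + 1), (A ^ j).mulVec (v j))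
              (∑ j ∈ Finset.range (K + 1), (B ^ j).mulVec (u j)) := by
        rw [hEq, ← elim_sum]
        exact Finset.sum_congr rfl fun j _ => by rw [heq]
      have := congrArg (· ∘ Sum.inr) this
      simpa using this
  · rintro ⟨hA, hB⟩ z hz
    obtain ⟨k, d, hd, hzeq⟩ := hz
    have hdecomp : z = Sum.elim (z ∘ Sum.inl) (z ∘ Sum.inr) := (Sum.elim_comp_inl_inr z).symm
    have hzelim : z = Sum.elim (∑ j ∈ Finset.range (k + 1), (A ^ j).mulVec (d j ∘ Sum.inl))
        (∑ j ∈ Finset.range (k + 1), (B ^ j).mulVec (d j ∘ Sum.inr)) := by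
      rw [hzeq, ← elim_sum]
      exact Finset.sum_congr rfl fun j _ => by rw [Sum.elim_comp_inl_inr]
    have hzl : z ∘ Sum.inl ∈ latticeModule A :=
      ⟨k, fun j => d j ∘ Sum.inl, fun j i => hd j (Sum.inl i), by
        have := congrArg (· ∘ Sum.inl) hzelim; simpa using this⟩
    have hzr : z ∘ Sum.inr ∈ latticeModule B :=
      ⟨k, fun j => d j ∘ Sum.inr, fun j i => hd j (Sum.inr i), by
        have := congrArg (· ∘ Sum.inr) hzelim; simpa using this⟩
    obtain ⟨ka, da, hda, h1⟩ := hA hzl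
    obtain ⟨kb, db, hdb, h2⟩ := hB hzr
    obtain ⟨da', hda', h1'⟩ := radix_pad A DA h0A hda h1 (le_max_left ka kb)
    obtain ⟨db', hdb', h2'⟩ := radix_pad B DB h0B hdb h2 (le_max_right ka kb)
    refine ⟨max ka kb, fun j => Sum.elim (da' j) (db' j),
      fun j => ⟨da' j, hda' j, db' j, hdb' j, rfl⟩, ?_⟩
    rw [elim_sum, ← h1', ← h2']
    exact hdecomp
end

section
/- Let A ∈ M_n(ℚ) and let T ∈ M_n(ℤ) be invertible over ℚ with A = T B T^{−1} for some B ∈ M_n(ℚ). If (B, D) is a digit system with the finiteness property in ℤ^n[B], then (A, TD) is a digit system with the finiteness property in the module (Tℤ^n)[A] := ⋃_{k≥1}(Tℤ^n + A Tℤ^n + ⋯ + A^{k−1}Tℤ^n). -/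
open Matrix

lemma conj_pow_mulVec {n : ℕ} (A B S : Matrix (Fin n) (Fin n) ℚ)
    (hS : IsUnit S.det) (hAB : A = S * B * S⁻¹) (j : ℕ) (x : Fin n → ℚ) :
    (A ^ j).mulVec (S.mulVec x) = S.mulVec ((B ^ j).mulVec x) := by
  have key : A ^ j * S = S * B ^ j := by
    induction j with
    | zero => simp
    | succ k ih =>
        calc A ^ (k + 1) * S = A ^ k * (A * S) := by rw [pow_succ, mul_assoc]
          _ = A ^ k * (S * B) := by
              rw [hAB, mul_assoc (S * B) S⁻¹ S, Matrix.nonsing_inv_mul S hS,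
                mul_one]
          _ = (A ^ k * S) * B := by rw [mul_assoc]
          _ = S * B ^ k * B := by rw [ih]
          _ = S * B ^ (k + 1) := by rw [pow_succ, mul_assoc]
  rw [Matrix.mulVec_mulVec, Matrix.mulVec_mulVec, key]

lemma mulVec_sum' {n : ℕ} (S : Matrix (Fin n) (Fin n) ℚ) (s : Finset ℕ)
    (f : ℕ → Fin n → ℚ) : S.mulVec (∑ j ∈ s, f j) = ∑ j ∈ s, S.mulVec (f j) :=
  map_sum S.mulVecLin f s

lemma radix_conj {n : ℕ} (A B S : Matrix (Fin n) (Fin n) ℚ)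
    (hS : IsUnit S.det) (hAB : A = S * B * S⁻¹) (D : Set (Fin n → ℚ)) :
    radix A (S.mulVec '' D) = S.mulVec '' radix B D := by
  ext z
  constructor
  · rintro ⟨k, d, hd, rfl⟩
    choose e he1 he2 using fun j => hd j
    refine ⟨∑ j ∈ Finset.range (k + 1), (B ^ j).mulVec (e j), ⟨k, e, he1, rfl⟩, ?_⟩
    rw [mulVec_sum']
    refine Finset.sum_congr rfl fun j _ => ?_
    rw [← conj_pow_mulVec A B S hS hAB, he2]
  · rintro ⟨w, ⟨k, d, hd, rfl⟩, rfl⟩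
    refine ⟨k, fun j => S.mulVec (d j), fun j => ⟨d j, hd j, rfl⟩, ?_⟩
    rw [mulVec_sum']
    exact Finset.sum_congr rfl fun j _ => (conj_pow_mulVec A B S hS hAB j (d j)).symm

theorem conjugated_digit_system {n : ℕ} (A B : Matrix (Fin n) (Fin n) ℚ)
    (T : Matrix (Fin n) (Fin n) ℤ)
    (hT : IsUnit (T.map (Int.cast : ℤ → ℚ)).det)
    (hAB : A = T.map (Int.cast : ℤ → ℚ) * B * (T.map (Int.cast : ℤ → ℚ))⁻¹)
    (D : Set (Fin n → ℚ)) (hD : D.Finite) (hDsub : D ⊆ latticeModule B)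
    (hfin : latticeModule B ⊆ radix B D) :
    ((T.map (Int.cast : ℤ → ℚ)).mulVec '' D ⊆
        radix A ((T.map (Int.cast : ℤ → ℚ)).mulVec '' intVecs)) ∧
    radix A ((T.map (Int.cast : ℤ → ℚ)).mulVec '' intVecs) ⊆
      radix A ((T.map (Int.cast : ℤ → ℚ)).mulVec '' D) := by
  set S := T.map (Int.cast : ℤ → ℚ)
  rw [radix_conj A B S hT hAB, radix_conj A B S hT hAB]
  exact ⟨Set.image_mono hDsub, Set.image_mono hfin⟩
end

section
/- Let A ∈ M_n(ℤ) be an integer matrix that has an eigenvalue λ with |λ| = 1 and suppose every eigenvalue of A has absolute value ≥ 1. Then A has an eigenvalue that is a root of unity; consequently there exist a nonzero vector v ∈ ℤ^n and m ∈ ℕ with A^m v = v, and hence no digit system (A, D) in ℤ^n with 0 ∈ D can have the unique representation property. -/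
open Matrix Polynomial

-- eigenvalue iff root of charpoly, over a field
lemma eval_charpoly_eq_det {n : ℕ} {F : Type*} [Field F] (M : Matrix (Fin n) (Fin n) F) (μ : F) :
    M.charpoly.eval μ = (Matrix.diagonal (fun _ => μ) - M).det := by
  rw [Matrix.charpoly, ← Polynomial.coe_evalRingHom, RingHom.map_det]
  congr 1
  ext i j
  by_cases h : i = j <;>
    simp [charmatrix_apply, h, Matrix.diagonal]

lemma eig_iff_root {n : ℕ} {F : Type*} [Field F] (M : Matrix (Fin n) (Fin n) F) (μ : F) :
    (∃ v : Fin n → F, v ≠ 0 ∧ M.mulVec v = μ • v) ↔ M.charpoly.eval μ = 0 := by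
  rw [eval_charpoly_eq_det, ← Matrix.exists_mulVec_eq_zero_iff]
  have hd : ∀ v : Fin n → F, (Matrix.diagonal (fun _ => μ) - M).mulVec v
      = μ • v - M.mulVec v := by
    intro v
    rw [Matrix.sub_mulVec]
    congr 1
    rw [show (Matrix.diagonal (fun _ : Fin n => μ)) = μ • (1 : Matrix (Fin n) (Fin n) F) by
      simp [Matrix.smul_one_eq_diagonal], Matrix.smul_mulVec, Matrix.one_mulVec]
  constructor
  · rintro ⟨v, hv, h⟩
    exact ⟨v, hv, by rw [hd, h, sub_self]⟩
  · rintro ⟨v, hv, h⟩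
    refine ⟨v, hv, ?_⟩
    rw [hd] at h
    linear_combination (norm := module) -h

open Matrix Polynomial IntermediateField

lemma aeval_ratHom_apply {R S : Type*} [Field R] [Field S] [Algebra ℚ R] [Algebra ℚ S]
    (φ : R →+* S) (z : R) (q : Polynomial ℚ) :
    Polynomial.aeval (φ z) q = φ (Polynomial.aeval z q) := by
  rw [Polynomial.aeval_def, Polynomial.aeval_def, Polynomial.hom_eval₂]
  congr 1
  exact Subsingleton.elim _ _

lemma kronecker_aux (lam : ℂ) (habs : ‖lam‖ = 1)
    (p : Polynomial ℤ) (hmonic : p.Monic)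
    (hroot : (p.map (Int.castRingHom ℂ)).eval lam = 0)
    (hbig : ∀ μ : ℂ, (p.map (Int.castRingHom ℂ)).eval μ = 0 → 1 ≤ ‖μ‖) :
    ∃ m : ℕ, 0 < m ∧ lam ^ m = 1 := by
  have hint : IsIntegral ℤ lam := by
    refine ⟨p, hmonic, ?_⟩
    rwa [Polynomial.eval₂_eq_eval_map]
  have hintQ : IsIntegral ℚ lam := hint.tower_top
  set q : Polynomial ℚ := minpoly ℚ lam with hq
  have hpQ : Polynomial.aeval lam (p.map (Int.castRingHom ℚ)) = 0 := by
    rw [Polynomial.aeval_def, Polynomial.eval₂_eq_eval_map, Polynomial.map_map]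
    rwa [show (algebraMap ℚ ℂ).comp (Int.castRingHom ℚ) = Int.castRingHom ℂ by
      ext : 1 <;> simp]
  have hdvd : q ∣ p.map (Int.castRingHom ℚ) := minpoly.dvd ℚ lam hpQ
  have hqbig : ∀ μ : ℂ, Polynomial.aeval μ q = 0 → 1 ≤ ‖μ‖ := by
    intro μ hμ
    obtain ⟨r, hr⟩ := hdvd
    apply hbig
    have : Polynomial.aeval μ (p.map (Int.castRingHom ℚ)) = 0 := by
      rw [hr, _root_.map_mul, hμ, zero_mul]
    rw [Polynomial.aeval_def, Polynomial.eval₂_eq_eval_map, Polynomial.map_map,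
      show (algebraMap ℚ ℂ).comp (Int.castRingHom ℚ) = Int.castRingHom ℂ by
        ext : 1 <;> simp] at this
    exact this
  have hlam0 : lam ≠ 0 := by
    intro h; rw [h] at habs; simp at habs
  have hconj : (starRingEnd ℂ) lam = lam⁻¹ := by
    field_simp
    rw [mul_comm, Complex.mul_conj, Complex.normSq_eq_norm_sq, habs]
    norm_num
  have hinvroot : Polynomial.aeval (lam⁻¹) q = 0 := by
    rw [← hconj, aeval_ratHom_apply (starRingEnd ℂ) lam q, minpoly.aeval, map_zero]
  haveI : FiniteDimensional ℚ ℚ⟮lam⟯ := IntermediateField.adjoin.finiteDimensional hintQ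
  haveI : NumberField ℚ⟮lam⟯ := ⟨⟩
  set x : ℚ⟮lam⟯ := IntermediateField.AdjoinSimple.gen ℚ lam with hx
  have halg : algebraMap ℚ⟮lam⟯ ℂ x = lam := IntermediateField.AdjoinSimple.algebraMap_gen ℚ lam
  have hxint : IsIntegral ℤ x := by
    rwa [← isIntegral_algebraMap_iff (algebraMap ℚ⟮lam⟯ ℂ).injective, halg]
  have hminx : minpoly ℚ x = q := by
    rw [hx, hq]; exact IntermediateField.minpoly_gen ℚ lam
  have hxinv : Polynomial.aeval (x⁻¹) q = 0 := by
    have : algebraMap ℚ⟮lam⟯ ℂ (Polynomial.aeval (x⁻¹) q) = 0 := by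
      rw [← Polynomial.aeval_algebraMap_apply, map_inv₀, halg, hinvroot]
    exact (map_eq_zero_iff _ (algebraMap ℚ⟮lam⟯ ℂ).injective).mp this
  have hdvd2 : minpoly ℚ (x⁻¹) ∣ q := minpoly.dvd ℚ (x⁻¹) hxinv
  have hnorm : ∀ φ : ℚ⟮lam⟯ →+* ℂ, ‖φ x‖ = 1 := by
    intro φ
    have h1 : Polynomial.aeval (φ x) q = 0 := by
      rw [aeval_ratHom_apply φ x q, ← hminx, minpoly.aeval, map_zero]
    have h2 : Polynomial.aeval (φ (x⁻¹)) (minpoly ℚ (x⁻¹)) = 0 := by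
      rw [aeval_ratHom_apply φ (x⁻¹) (minpoly ℚ (x⁻¹)), minpoly.aeval, map_zero]
    have h2' : Polynomial.aeval ((φ x)⁻¹) q = 0 := by
      obtain ⟨r, hr⟩ := hdvd2
      rw [← map_inv₀, hr, _root_.map_mul, h2, zero_mul]
    have hb1 : 1 ≤ ‖φ x‖ := hqbig _ h1
    have hb2 : 1 ≤ ‖(φ x)⁻¹‖ := hqbig _ h2'
    rw [norm_inv] at hb2
    have := (one_le_inv₀ (lt_of_lt_of_le one_pos hb1)).mp hb2
    linarith
  obtain ⟨m, hm, hxm⟩ := NumberField.Embeddings.pow_eq_one_of_norm_eq_one ℚ⟮lam⟯ ℂ hxint hnorm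
  refine ⟨m, hm, ?_⟩
  have := congrArg (algebraMap ℚ⟮lam⟯ ℂ) hxm
  rwa [map_pow, halg, _root_.map_one] at this

lemma int_fixed_vector {n : ℕ} (A : Matrix (Fin n) (Fin n) ℤ) (lam : ℂ) (m : ℕ)
    (hlm : lam ^ m = 1) (v : Fin n → ℂ) (hv : v ≠ 0)
    (hAv : (A.map (Int.cast : ℤ → ℂ)).mulVec v = lam • v) :
    ∃ w : Fin n → ℤ, w ≠ 0 ∧ (A ^ m).mulVec w = w := by
  classical
  set Ac : Matrix (Fin n) (Fin n) ℂ := A.map (Int.cast : ℤ → ℂ) with hAcdef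
  have hpow : ∀ k, (Ac ^ k).mulVec v = lam ^ k • v := by
    intro k; induction k with
    | zero => simp [Matrix.one_mulVec]
    | succ k ih =>
      rw [pow_succ, ← Matrix.mulVec_mulVec, hAv, Matrix.mulVec_smul, ih, pow_succ,
        smul_smul, mul_comm]
  set B : Matrix (Fin n) (Fin n) ℤ := A ^ m - 1 with hB
  have hBc : B.map (Int.cast : ℤ → ℂ) = Ac ^ m - 1 := by
    have h1 : B.map (Int.cast : ℤ → ℂ) = (Int.castRingHom ℂ).mapMatrix B := rfl
    rw [h1, hB, _root_.map_sub, _root_.map_pow, _root_.map_one]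
    rfl
  have hmul : (Ac ^ m - 1).mulVec v = 0 := by
    rw [Matrix.sub_mulVec, Matrix.one_mulVec, hpow m, hlm, one_smul, sub_self]
  have hdetC : (Int.castRingHom ℂ) B.det = 0 := by
    rw [RingHom.map_det, RingHom.mapMatrix_apply]
    rw [show B.map ⇑(Int.castRingHom ℂ) = B.map (Int.cast : ℤ → ℂ) from rfl, hBc]
    exact Matrix.exists_mulVec_eq_zero_iff.mp ⟨v, hv, hmul⟩
  have hdet : B.det = 0 := by
    have : ((B.det : ℤ) : ℂ) = 0 := hdetC
    exact_mod_cast this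
  obtain ⟨w, hw, hBw⟩ := Matrix.exists_mulVec_eq_zero_iff.mpr hdet
  refine ⟨w, hw, ?_⟩
  rw [hB, Matrix.sub_mulVec, Matrix.one_mulVec, sub_eq_zero] at hBw
  exact hBw

lemma no_unique_rep {n : ℕ} (A : Matrix (Fin n) (Fin n) ℤ) (w : Fin n → ℤ) (hw : w ≠ 0)
    (m : ℕ) (hm : 0 < m) (hAw : (A ^ m).mulVec w = w)
    (D : Set (Fin n → ℤ)) (hD0 : (0 : Fin n → ℤ) ∈ D) :
    ¬ (∀ z : Fin n → ℤ, ∃! d : ℕ → Fin n → ℤ,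
        (∀ j, d j ∈ D) ∧ (∃ K : ℕ, ∀ j ≥ K, d j = 0) ∧
        (∀ K : ℕ, (∀ j ≥ K, d j = 0) →
          z = ∑ j ∈ Finset.range K, (A ^ j).mulVec (d j))) := by
  intro huniq
  obtain ⟨d, ⟨hdD, ⟨K0, hK0⟩, hsum⟩, huni⟩ := huniq w
  classical
  set d' : ℕ → Fin n → ℤ := fun j => if j < m then 0 else d (j - m) with hd'
  have hd'P : (∀ j, d' j ∈ D) ∧ (∃ K, ∀ j ≥ K, d' j = 0) ∧
      (∀ K : ℕ, (∀ j ≥ K, d' j = 0) →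
        w = ∑ j ∈ Finset.range K, (A ^ j).mulVec (d' j)) := by
    refine ⟨?_, ⟨K0 + m, ?_⟩, ?_⟩
    · intro j; by_cases h : j < m <;> simp [hd', h, hD0, hdD]
    · intro j hj
      have h1 : ¬ j < m := by omega
      have h2 : j - m ≥ K0 := by omega
      simp [hd', h1, hK0 _ h2]
    · intro K hK
      by_cases hKm : m ≤ K
      · have hdz : ∀ j ≥ K - m, d j = 0 := by
          intro j hj
          have := hK (j + m) (by omega)
          simpa [hd', show ¬ j + m < m by omega] using this
        have hw' : w = ∑ j ∈ Finset.range (K - m), (A ^ j).mulVec (d j) := hsum _ hdz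
        have hsplit : ∑ j ∈ Finset.range m, (A ^ j).mulVec (d' j)
              + ∑ j ∈ Finset.Ico m K, (A ^ j).mulVec (d' j)
            = ∑ j ∈ Finset.range K, (A ^ j).mulVec (d' j) :=
          Finset.sum_range_add_sum_Ico _ hKm
        have hfirst : ∑ j ∈ Finset.range m, (A ^ j).mulVec (d' j) = 0 := by
          apply Finset.sum_eq_zero
          intro j hj
          rw [Finset.mem_range] at hj
          simp [hd', hj]
        have hsecond : ∑ j ∈ Finset.Ico m K, (A ^ j).mulVec (d' j) = w := by
          rw [Finset.sum_Ico_eq_sum_range]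
          have hterm : ∀ i ∈ Finset.range (K - m), (A ^ (m + i)).mulVec (d' (m + i))
              = (A ^ m).mulVec ((A ^ i).mulVec (d i)) := by
            intro i _
            have h1 : d' (m + i) = d i := by simp [hd', show ¬ m + i < m by omega]
            rw [h1, pow_add, Matrix.mulVec_mulVec]
          rw [Finset.sum_congr rfl hterm]
          have : ∑ i ∈ Finset.range (K - m), (A ^ m).mulVec ((A ^ i).mulVec (d i))
              = (A ^ m).mulVec (∑ i ∈ Finset.range (K - m), (A ^ i).mulVec (d i)) := by
            simp_rw [← Matrix.mulVecLin_apply]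
            rw [← map_sum]
          rw [this, ← hw', hAw]
        rw [← hsplit, hfirst, hsecond, zero_add]
      · have hdz : ∀ j, d j = 0 := by
          intro j
          have h1 : d' (j + m) = d j := by simp [hd', show ¬ j + m < m by omega]
          rw [← h1]
          exact hK (j + m) (by omega)
        have hw0 : w = 0 := by simpa using hsum 0 (fun j _ => hdz j)
        have : ∀ j ∈ Finset.range K, (A ^ j).mulVec (d' j) = 0 := by
          intro j hj
          rw [Finset.mem_range] at hj
          simp [hd', show j < m by omega]
        rw [Finset.sum_congr rfl this, Finset.sum_const_zero, hw0]
  have heq : d' = d := huni d' hd'P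
  have hdzero : ∀ j, d j = 0 := by
    intro j
    induction j using Nat.strong_induction_on with
    | _ j ih =>
      by_cases h : j < m
      · rw [← congrFun heq j]; simp [hd', h]
      · have h1 : d j = d (j - m) := by
          rw [← congrFun heq j]; simp [hd', h]
        rw [h1]; exact ih (j - m) (by omega)
  exact hw (by simpa using hsum 0 (fun j _ => hdzero j))

theorem no_unique_representation {n : ℕ} (A : Matrix (Fin n) (Fin n) ℤ)
    (hone : ∃ lam : ℂ, ‖lam‖ = 1 ∧ ∃ v : Fin n → ℂ, v ≠ 0 ∧
      (A.map (Int.cast : ℤ → ℂ)).mulVec v = lam • v)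
    (hbig : ∀ lam : ℂ, (∃ v : Fin n → ℂ, v ≠ 0 ∧
      (A.map (Int.cast : ℤ → ℂ)).mulVec v = lam • v) → 1 ≤ ‖lam‖) :
    (∃ lam : ℂ, (∃ v : Fin n → ℂ, v ≠ 0 ∧
        (A.map (Int.cast : ℤ → ℂ)).mulVec v = lam • v) ∧
      ∃ m : ℕ, 0 < m ∧ lam ^ m = 1) ∧
    (∃ v : Fin n → ℤ, v ≠ 0 ∧ ∃ m : ℕ, 0 < m ∧ (A ^ m).mulVec v = v) ∧
    ∀ D : Set (Fin n → ℤ), D.Finite → (0 : Fin n → ℤ) ∈ D →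
      ¬ (∀ z : Fin n → ℤ, ∃! d : ℕ → Fin n → ℤ,
          (∀ j, d j ∈ D) ∧ (∃ K : ℕ, ∀ j ≥ K, d j = 0) ∧
          (∀ K : ℕ, (∀ j ≥ K, d j = 0) →
            z = ∑ j ∈ Finset.range K, (A ^ j).mulVec (d j))) := by
  classical
  obtain ⟨lam, habs, v, hv, hAv⟩ := hone
  set Ac : Matrix (Fin n) (Fin n) ℂ := A.map (Int.cast : ℤ → ℂ) with hAc
  have hcp : Ac.charpoly = A.charpoly.map (Int.castRingHom ℂ) := by
    rw [show Ac = A.map (Int.castRingHom ℂ) from rfl, Matrix.charpoly_map]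
  have hroot : (A.charpoly.map (Int.castRingHom ℂ)).eval lam = 0 := by
    rw [← hcp]
    exact (eig_iff_root Ac lam).mp ⟨v, hv, hAv⟩
  have hbig' : ∀ μ : ℂ, (A.charpoly.map (Int.castRingHom ℂ)).eval μ = 0 →
      1 ≤ ‖μ‖ := by
    intro μ hμ
    rw [← hcp] at hμ
    exact hbig μ ((eig_iff_root Ac μ).mpr hμ)
  obtain ⟨m, hm, hlm⟩ := kronecker_aux lam habs A.charpoly A.charpoly_monic hroot hbig'
  obtain ⟨w, hw, hAmw⟩ := int_fixed_vector A lam m hlm v hv hAv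
  refine ⟨⟨lam, ⟨v, hv, hAv⟩, m, hm, hlm⟩, ⟨w, hw, m, hm, hAmw⟩, ?_⟩
  intro D _ hD0
  exact no_unique_rep A w hw m hm hAmw D hD0
end
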